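/- arXiv:math/0509334 — 3 statements merged into one kernel-verified Lean document; each statement's English description precedes it below -/
import Mathlib

section
/- Let k be a commutative ring, A a unital k-algebra that is free as a k-module, and n ≥ 2. Then the top graph cohomology of the directed (n+1)-gon satisfies Ĥ^n_A(P_{n+1}) ≅ A / C, where C is the k-submodule of A generated by all commutators ab − ba (a, b ∈ A); equivalently Ĥ^n_A(P_{n+1}) ≅ HH_0(A). -/
open TensorProduct DirectSum

universe u

section HochschildCore

variable (k : Type u) [CommRing k] (A : Type u) [Ring A] [Algebra k A]
variable (M : Type u) [AddCommGroup M] [Module k M]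
  [Module A M] [Module Aᵐᵒᵖ M] [SMulCommClass A Aᵐᵒᵖ M]
  [IsScalarTower k A M] [IsScalarTower k Aᵐᵒᵖ M]

/-- The Hochschild chain module `C_r(A,M) = M ⊗ A^{⊗ r}` (iterated tensor product over `k`),
bundled as an object of `ModuleCat k`. -/
noncomputable def HochOb : ℕ → ModuleCat.{u} k
  | 0 => ModuleCat.of k M
  | (r+1) => ModuleCat.of k ((HochOb r : Type u) ⊗[k] A)

/-- The Hochschild chain module `C_r(A,M) = M ⊗ A^{⊗ r}`. -/
noncomputable abbrev HC (r : ℕ) : Type u := HochOb k A M r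

/-- The left action of `A` on `M`, as a bilinear map over `k`. -/
noncomputable def actL0 : A →ₗ[k] M →ₗ[k] M where
  toFun a :=
    { toFun := fun x => a • x
      map_add' := fun x y => smul_add a x y
      map_smul' := fun c x => (smul_comm c a x).symm }
  map_add' a b := LinearMap.ext fun x => add_smul a b x
  map_smul' c a := LinearMap.ext fun x => smul_assoc c a x

/-- The right action of `A` on `M`, as a bilinear map over `k`. -/
noncomputable def actR : M →ₗ[k] A →ₗ[k] M where
  toFun x :=
    { toFun := fun a => MulOpposite.op a • x
      map_add' := fun a b => by rw [MulOpposite.op_add, add_smul]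
      map_smul' := fun c a => by
        dsimp only [RingHom.id_apply]; rw [MulOpposite.op_smul, smul_assoc] }
  map_add' x y := LinearMap.ext fun a => smul_add _ x y
  map_smul' c x := LinearMap.ext fun a => (smul_comm c _ x).symm

/-- The left action of `A` on the `M`-factor of `C_r(A,M)`, as a bilinear map. -/
noncomputable def actL : (r : ℕ) → (A →ₗ[k] HC k A M r →ₗ[k] HC k A M r)
  | 0 => actL0 k A M
  | (r+1) => (LinearMap.rTensorHom A).comp (actL r)

/-- The Hochschild face maps `d_i : C_{r+1}(A,M) → C_r(A,M)`, `i = 0, …, r+1`: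
`d_0 (m, a_1, …, a_{r+1}) = (m a_1, a_2, …, a_{r+1})`,
`d_i (m, a_1, …, a_{r+1}) = (m, a_1, …, a_i a_{i+1}, …, a_{r+1})` for `1 ≤ i ≤ r`, and
`d_{r+1} (m, a_1, …, a_{r+1}) = (a_{r+1} m, a_1, …, a_r)`. -/
noncomputable def hface : (r : ℕ) → Fin (r+2) → (HC k A M (r+1) →ₗ[k] HC k A M r)
  | 0, i =>
      if i.val = 0 then TensorProduct.lift (actR k A M)
      else TensorProduct.lift ((actL k A M 0).flip)
  | (r+1), i =>
      if h : i.val ≤ r then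
        LinearMap.rTensor A (hface r ⟨i.val, by omega⟩)
      else if i.val = r + 1 then
        (LinearMap.lTensor (HC k A M r) (LinearMap.mul' k A)).comp
          (TensorProduct.assoc k (HC k A M r) A A).toLinearMap
      else
        TensorProduct.lift ((actL k A M (r+1)).flip)

/-- The Hochschild boundary `b = Σ_{i=0}^{r+1} (-1)^i d_i : C_{r+1}(A,M) → C_r(A,M)`. -/
noncomputable def hboundary (r : ℕ) : HC k A M (r+1) →ₗ[k] HC k A M r :=
  ∑ i : Fin (r+2), ((-1 : ℤ) ^ (i : ℕ)) • hface k A M r i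

/-- The submodule of Hochschild cycles in degree `r`. -/
noncomputable def hcycles : (r : ℕ) → Submodule k (HC k A M r)
  | 0 => ⊤
  | (r+1) => LinearMap.ker (hboundary k A M r)

/-- The Hochschild homology `H_r(A,M)` of `A` with coefficients in the bimodule `M`:
the `r`-th homology of the Hochschild chain complex `C_*(A,M)`. -/
noncomputable def HochH (r : ℕ) : Type u :=
  (hcycles k A M r) ⧸ (Submodule.comap (hcycles k A M r).subtype
    (LinearMap.range (hboundary k A M r)))

noncomputable instance (r : ℕ) : AddCommGroup (HochH k A M r) :=
  inferInstanceAs (AddCommGroup ((hcycles k A M r) ⧸ (Submodule.comap (hcycles k A M r).subtype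
    (LinearMap.range (hboundary k A M r)))))

noncomputable instance (r : ℕ) : Module k (HochH k A M r) :=
  inferInstanceAs (Module k ((hcycles k A M r) ⧸ (Submodule.comap (hcycles k A M r).subtype
    (LinearMap.range (hboundary k A M r)))))

end HochschildCore
section PolygonCore

variable (k : Type u) [CommRing k] (A : Type u) [Ring A] [Algebra k A]
variable (M : Type u) [AddCommGroup M] [Module k M]
  [Module A M] [Module Aᵐᵒᵖ M] [SMulCommClass A Aᵐᵒᵖ M]
  [IsScalarTower k A M] [IsScalarTower k Aᵐᵒᵖ M]

/-- Subsets of the edge set of a graph with `m` edges having exactly `j` elements. -/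
def EdgeSub (m j : ℕ) : Type := {s : Finset (Fin m) // s.card = j}

instance (m j : ℕ) : DecidableEq (EdgeSub m j) := by unfold EdgeSub; infer_instance

/-- The `j`-th cochain group of the `M`-reduced graph cochain complex of the directed
`m`-gon `P_m`: the direct sum over all `j`-element subsets `s` of the edge set of
`Φ̂(s) = M ⊗ A^{⊗ (k(s) - 1)}`, where `k(s) = m - j` (for `j < m`) is the number of
connected components of the spanning subgraph `[P_m : s]`; the factor `M` is the weight of
the component containing the base vertex `v₀` and the `A`-factors are the weights of the
remaining components, listed anticlockwise starting from the component of `v₀`. -/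
noncomputable def PChain (m j : ℕ) : Type u :=
  ⨁ (_s : EdgeSub m j), HC k A M (m - 1 - j)

noncomputable instance (m j : ℕ) : AddCommGroup (PChain k A M m j) :=
  inferInstanceAs (AddCommGroup (⨁ (_s : EdgeSub m j), HC k A M (m - 1 - j)))

noncomputable instance (m j : ℕ) : Module k (PChain k A M m j) :=
  inferInstanceAs (Module k (⨁ (_s : EdgeSub m j), HC k A M (m - 1 - j)))

/-- The morphism `Φ̂(s ⊂ s ∪ e)` of the `M`-reduced graph cochain complex of the
directed `m`-gon, in coordinates: `i` is the number of edges of the complement of `s`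
which are smaller than `e`.  Adding the edge `e` merges the two components of `[P_m : s]`
adjacent to `e` (multiplying their weights in the order given by the direction of `e`),
which in coordinates is exactly the Hochschild face map `d_i`; if `e` joins a component
of `[P_m : s]` to itself (which for the polygon happens exactly when `j = m - 1`), the
morphism is the zero map. -/
noncomputable def pMerge (m j i : ℕ) : HC k A M (m-1-j) →ₗ[k] HC k A M (m-1-(j+1)) :=
  if h : j + 2 ≤ m ∧ i < m - j then by
    rw [show m-1-j = (m-2-j)+1 by omega, show m-1-(j+1) = m-2-j by omega]
    exact hface k A M (m-2-j) ⟨i, by omega⟩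
  else 0

/-- The differential of the `M`-reduced graph cochain complex of the directed `m`-gon:
`d(s) = Σ_{e ∉ s} (-1)^{t(s,e)} Φ̂(s ⊂ s ∪ e)` where `t(s,e)` is the number of edges of
`s` smaller than `e`. -/
noncomputable def pD (m j : ℕ) : PChain k A M m j →ₗ[k] PChain k A M m (j+1) :=
  DirectSum.toModule k (EdgeSub m j) (PChain k A M m (j+1)) (fun s =>
    ∑ e ∈ (s.val)ᶜ.attach,
      ((-1 : ℤ) ^ ((s.val.filter (fun a => a < e.val)).card)) •
        ((DirectSum.lof k (EdgeSub m (j+1)) (fun _ => HC k A M (m-1-(j+1)))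
            ⟨insert e.val s.val, by
              rw [Finset.card_insert_of_notMem (Finset.mem_compl.mp e.property), s.property]⟩).comp
          (pMerge k A M m j (((s.val)ᶜ.filter (fun a => a < e.val)).card))))

/-- The coboundaries of the `M`-reduced graph cochain complex of the directed `m`-gon. -/
noncomputable def pBnd : (m j : ℕ) → Submodule k (PChain k A M m j)
  | _, 0 => ⊥
  | m, (j+1) => LinearMap.range (pD k A M m j)

/-- The `M`-reduced graph cohomology `Ĥ^j_{A,M}(P_m)` of the directed `m`-gon. -/
noncomputable def PolyCoh (m j : ℕ) : Type u :=
  (LinearMap.ker (pD k A M m j)) ⧸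
    (Submodule.comap (LinearMap.ker (pD k A M m j)).subtype (pBnd k A M m j))

noncomputable instance (m j : ℕ) : AddCommGroup (PolyCoh k A M m j) :=
  inferInstanceAs (AddCommGroup ((LinearMap.ker (pD k A M m j)) ⧸
    (Submodule.comap (LinearMap.ker (pD k A M m j)).subtype (pBnd k A M m j))))

noncomputable instance (m j : ℕ) : Module k (PolyCoh k A M m j) :=
  inferInstanceAs (Module k ((LinearMap.ker (pD k A M m j)) ⧸
    (Submodule.comap (LinearMap.ker (pD k A M m j)).subtype (pBnd k A M m j))))

end PolygonCore

/-!
In top degree `q + 1` of the `(q + 2)`-gon only one edge `g` is missing, so the spanning subgraph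
is connected and each cochain summand is a copy of `M`; the differential out of this degree
vanishes because adding the last edge closes the cycle. The coboundaries come from the subsets
missing two edges `e < f`: the cochain `x ⊗ a` there has coboundary `(-1)^e (x a)` at `{f}ᶜ`
and `(-1)^(f-1) (a x)` at `{e}ᶜ`. With `a = 1` and `f = e + 1` these identify the summand at `g`
with `(-1)^g` times the summand at `0`; the remaining relations then say exactly `x a ∼ a x`,
so the top cohomology is `M / [A, M] = HH₀(A, M)`.
-/

noncomputable def Submodule.quotientComapSubtypeEquivOfEqTop {R N : Type*} [Ring R]
    [AddCommGroup N] [Module R N] (p : Submodule R N) (hp : p = ⊤) (S : Submodule R N) :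
    (p ⧸ S.comap p.subtype) ≃ₗ[R] N ⧸ S :=
  Submodule.Quotient.equiv _ _ (LinearEquiv.ofTop p hp) (by
    rw [LinearEquiv.toLinearMap_ofTop, Submodule.map_comap_subtype, hp, top_inf_eq])

lemma LinearMap.cast_eq_comp_cast {R ι : Type*} [Semiring R] {X : ι → Type*}
    [∀ i, AddCommMonoid (X i)] [∀ i, Module R (X i)] {a a' b b' : ι} (ha : a = a')
    (hb : b = b') (h : (X a →ₗ[R] X b) = (X a' →ₗ[R] X b')) (f : X a →ₗ[R] X b) :
    cast h f =
      (LinearEquiv.cast hb).toLinearMap ∘ₗ f ∘ₗ (LinearEquiv.cast ha.symm).toLinearMap := by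
  subst ha hb; rfl

section HochschildDegreeZero

variable (k : Type u) [CommRing k] (A : Type u) [Ring A] [Algebra k A]
variable (M : Type u) [AddCommGroup M] [Module k M] [Module A M] [Module Aᵐᵒᵖ M]
  [IsScalarTower k A M] [IsScalarTower k Aᵐᵒᵖ M]

/-- `hboundary k A M 0`, retyped on `M ⊗ A → M` so that its range is a submodule of `M` itself
rather than of `HC k A M 0`. -/
noncomputable def hboundaryZero : M ⊗[k] A →ₗ[k] M := hboundary k A M 0

lemma hboundaryZero_tmul (x : M) (a : A) :
    hboundaryZero k A M (x ⊗ₜ[k] a) = MulOpposite.op a • x - a • x := by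
  change ∑ i : Fin 2, ((-1 : ℤ) ^ (i : ℕ)) • hface k A M 0 i (x ⊗ₜ[k] a) = _
  rw [Fin.sum_univ_two, sub_eq_add_neg]
  exact congrArg₂ (· + ·) (one_smul ℤ _) (neg_one_smul ℤ _)

lemma range_hboundaryZero :
    LinearMap.range (hboundaryZero k A M) =
      Submodule.span k {x : M | ∃ (a : A) (y : M), x = MulOpposite.op a • y - a • y} := by
  apply le_antisymm
  · rintro _ ⟨v, rfl⟩
    induction v using TensorProduct.induction_on with
    | zero => simp
    | tmul y a => exact Submodule.subset_span ⟨a, y, hboundaryZero_tmul k A M y a⟩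
    | add v w hv hw => rw [map_add]; exact add_mem hv hw
  · rw [Submodule.span_le]
    rintro _ ⟨a, y, rfl⟩
    exact ⟨y ⊗ₜ[k] a, hboundaryZero_tmul k A M y a⟩

lemma range_hboundaryZero_self :
    LinearMap.range (hboundaryZero k A A) =
      Submodule.span k {x : A | ∃ a b : A, x = a * b - b * a} := by
  rw [range_hboundaryZero]
  congr 1
  ext x
  show (∃ (a y : A), x = MulOpposite.op a • y - a • y) ↔ ∃ a b : A, x = a * b - b * a
  simp only [op_smul_eq_mul, smul_eq_mul]
  exact exists_comm

noncomputable def hochHZeroEquiv :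
    HochH k A M 0 ≃ₗ[k] M ⧸ LinearMap.range (hboundaryZero k A M) :=
  Submodule.quotientComapSubtypeEquivOfEqTop (hcycles k A M 0) rfl _

lemma mkQ_op_smul_eq_mkQ_smul (x : M) (a : A) :
    (LinearMap.range (hboundaryZero k A M)).mkQ (MulOpposite.op a • x) =
      (LinearMap.range (hboundaryZero k A M)).mkQ (a • x) := by
  rw [← sub_eq_zero, ← map_sub, Submodule.mkQ_apply, Submodule.Quotient.mk_eq_zero]
  exact ⟨x ⊗ₜ[k] a, hboundaryZero_tmul k A M x a⟩

end HochschildDegreeZero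

namespace EdgeSub

def insertEdge {m j : ℕ} (s : EdgeSub m j) (e : Fin m) (he : e ∉ s.val) : EdgeSub m (j + 1) :=
  ⟨insert e s.val, by rw [Finset.card_insert_of_notMem he, s.property]⟩

def complSingleton {q : ℕ} (g : Fin (q + 2)) : EdgeSub (q + 2) (q + 1) :=
  ⟨{g}ᶜ, by simp [Finset.card_compl]⟩

def complPair {q : ℕ} (e f : Fin (q + 2)) (h : e ≠ f) : EdgeSub (q + 2) q :=
  ⟨{e, f}ᶜ, by rw [Finset.card_compl, Finset.card_pair h, Fintype.card_fin]; omega⟩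

lemma eq_complSingleton {q : ℕ} (s : EdgeSub (q + 2) (q + 1)) : ∃ g, s = complSingleton g := by
  obtain ⟨g, hg⟩ := Finset.card_eq_one.mp (show s.valᶜ.card = 1 by
    rw [Finset.card_compl, s.property, Fintype.card_fin]; omega)
  exact ⟨g, Subtype.ext (show s.val = {g}ᶜ by rw [← hg, compl_compl])⟩

lemma eq_complPair {q : ℕ} (s : EdgeSub (q + 2) q) :
    ∃ e f, ∃ h : e < f, s = complPair e f h.ne := by
  obtain ⟨e, f, hne, hef⟩ := Finset.card_eq_two.mp (show s.valᶜ.card = 2 by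
    rw [Finset.card_compl, s.property, Fintype.card_fin]; omega)
  rcases hne.lt_or_gt with h | h
  · exact ⟨e, f, h, Subtype.ext (show s.val = {e, f}ᶜ by rw [← hef, compl_compl])⟩
  · exact ⟨f, e, h, Subtype.ext (show s.val = {f, e}ᶜ by
      rw [Finset.pair_comm, ← hef, compl_compl])⟩

end EdgeSub

section Polygon

open EdgeSub

variable (k : Type u) [CommRing k] (A : Type u) [Ring A] [Algebra k A]
variable (M : Type u) [AddCommGroup M] [Module k M] [Module A M] [Module Aᵐᵒᵖ M]
  [IsScalarTower k A M] [IsScalarTower k Aᵐᵒᵖ M] (q : ℕ)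

noncomputable def pLof {m j : ℕ} (s : EdgeSub m j) :
    HC k A M (m - 1 - j) →ₗ[k] PChain k A M m j :=
  DirectSum.lof k (EdgeSub m j) (fun _ => HC k A M (m - 1 - j)) s

lemma pD_pLof {m j : ℕ} (s : EdgeSub m j) (x : HC k A M (m - 1 - j)) :
    pD k A M m j (pLof k A M s x) = ∑ e : Fin m, if he : e ∉ s.val then
      ((-1 : ℤ) ^ (s.val.filter (· < e)).card) •
        pLof k A M (s.insertEdge e he) (pMerge k A M m j (s.valᶜ.filter (· < e)).card x)
      else 0 := by
  rw [pD, pLof]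
  erw [DirectSum.toModule_lof, LinearMap.sum_apply, Finset.sum_attach_eq_sum_dite]
  refine Finset.sum_congr rfl fun e _ => ?_
  simp only [Finset.mem_compl]
  split_ifs <;> rfl

lemma pMerge_eq_zero {m j : ℕ} (h : m < j + 2) (i : ℕ) : pMerge k A M m j i = 0 :=
  dif_neg (by omega)

lemma pD_eq_zero {m j : ℕ} (h : m < j + 2) : pD k A M m j = 0 := by
  refine DirectSum.linearMap_ext k fun s => LinearMap.ext fun x => ?_
  exact (pD_pLof k A M s x).trans (by simp [pMerge_eq_zero k A M h]; rfl)

lemma pMerge_eq_hface {m j i r : ℕ} (hj : j + 2 ≤ m) (hi : i < m - j) (hr : m - 2 - j = r) :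
    pMerge k A M m j i =
      (LinearEquiv.cast (M := HC k A M) (by omega : r = m - 1 - (j + 1))).toLinearMap ∘ₗ
        hface k A M r ⟨i, by omega⟩ ∘ₗ
        (LinearEquiv.cast (M := HC k A M) (by omega : m - 1 - j = r + 1)).toLinearMap := by
  subst hr
  rw [pMerge, dif_pos ⟨hj, hi⟩]
  simp only [eq_mpr_eq_cast, cast_cast]
  exact LinearMap.cast_eq_comp_cast (by omega) (by omega) _ _

/-- `q + 2 - 1 - (q + 1) = 0` holds only propositionally, so the coefficients of the top
cochains are reached from `M` through a cast. -/
noncomputable def castTop : M ≃ₗ[k] HC k A M (q + 2 - 1 - (q + 1)) :=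
  LinearEquiv.cast (M := HC k A M) (by omega : 0 = q + 2 - 1 - (q + 1))

noncomputable def castSubtop : M ⊗[k] A ≃ₗ[k] HC k A M (q + 2 - 1 - q) :=
  LinearEquiv.cast (M := HC k A M) (by omega : 1 = q + 2 - 1 - q)

lemma pMerge_castSubtop (i : ℕ) (hi : i < 2) (v : M ⊗[k] A) :
    pMerge k A M (q + 2) q i (castSubtop k A M q v) =
      castTop k A M q (hface k A M 0 ⟨i, hi⟩ v) := by
  rw [pMerge_eq_hface k A M (by omega) (by omega) (by omega : q + 2 - 2 - q = 0)]
  simp only [LinearMap.comp_apply, LinearEquiv.coe_coe, castTop, castSubtop]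
  erw [LinearEquiv.cast_apply, LinearEquiv.cast_apply, cast_cast, cast_eq]
  rfl

lemma pD_pLof_complPair {e f : Fin (q + 2)} (hef : e < f) (x : M) (a : A) :
    pD k A M (q + 2) q (pLof k A M (complPair e f hef.ne) (castSubtop k A M q (x ⊗ₜ[k] a))) =
      (-1 : ℤ) ^ (e : ℕ) •
          pLof k A M (complSingleton f) (castTop k A M q (MulOpposite.op a • x)) +
        (-1 : ℤ) ^ ((f : ℕ) - 1) •
          pLof k A M (complSingleton e) (castTop k A M q (a • x)) := by
  have he : e ∉ (complPair e f hef.ne).val := by simp [complPair]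
  have hf : f ∉ (complPair e f hef.ne).val := by simp [complPair]
  rw [pD_pLof, Finset.sum_eq_add e f hef.ne (fun c _ hc => dif_neg (by simp [complPair, hc]))
    (by simp) (by simp), dif_pos he, dif_pos hf]
  have insert_e : (complPair e f hef.ne).insertEdge e he = complSingleton f :=
    Subtype.ext (show insert e {e, f}ᶜ = {f}ᶜ by ext; simp; grind)
  have insert_f : (complPair e f hef.ne).insertEdge f hf = complSingleton e :=
    Subtype.ext (show insert f {e, f}ᶜ = {e}ᶜ by ext; simp; grind)
  have below_e : ((complPair e f hef.ne).val.filter (· < e)).card = e := by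
    rw [← Fin.card_Iio]; congr 1; ext; simp [complPair]; omega
  have below_f : ((complPair e f hef.ne).val.filter (· < f)).card = f - 1 := by
    rw [← Fin.card_Iio, ← Finset.card_erase_of_mem (Finset.mem_Iio.mpr hef)]
    congr 1; ext; simp [complPair]; omega
  have missing_below_e : ((complPair e f hef.ne).valᶜ.filter (· < e)).card = 0 := by
    simp [complPair]; omega
  have missing_below_f : ((complPair e f hef.ne).valᶜ.filter (· < f)).card = 1 := by
    rw [Finset.card_eq_one]; exact ⟨e, by ext; simp [complPair]; omega⟩
  rw [insert_e, insert_f, below_e, below_f, missing_below_e, missing_below_f,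
    pMerge_castSubtop k A M q 0 (by omega), pMerge_castSubtop k A M q 1 (by omega)]
  rfl

/-- `∑ g ∈ sᶜ, g` is the edge `g` missing from `s = {g}ᶜ`, so the summand at `{g}ᶜ` is sent to
`(-1)^g` times its class. -/
noncomputable def topChainToCoinvariants :
    PChain k A M (q + 2) (q + 1) →ₗ[k] M ⧸ LinearMap.range (hboundaryZero k A M) :=
  DirectSum.toModule k _ _ fun s => (-1 : ℤ) ^ (∑ g ∈ s.valᶜ, (g : ℕ)) •
    ((LinearMap.range (hboundaryZero k A M)).mkQ ∘ₗ (castTop k A M q).symm.toLinearMap)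

lemma topChainToCoinvariants_pLof (g : Fin (q + 2)) (y : M) :
    topChainToCoinvariants k A M q (pLof k A M (complSingleton g) (castTop k A M q y)) =
      (-1 : ℤ) ^ (g : ℕ) • (LinearMap.range (hboundaryZero k A M)).mkQ y := by
  rw [topChainToCoinvariants, pLof]
  erw [DirectSum.toModule_lof]
  simp [complSingleton]

lemma topChainToCoinvariants_comp_pD :
    topChainToCoinvariants k A M q ∘ₗ pD k A M (q + 2) q = 0 := by
  refine DirectSum.linearMap_ext k fun s => LinearMap.ext fun w => ?_
  obtain ⟨e, f, hef, rfl⟩ := s.eq_complPair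
  obtain ⟨v, rfl⟩ := (castSubtop k A M q).surjective w
  change topChainToCoinvariants k A M q (pD k A M (q + 2) q
    (pLof k A M (complPair e f hef.ne) (castSubtop k A M q v))) = 0
  induction v using TensorProduct.induction_on with
  | zero => simp
  | add v w hv hw => simp only [map_add, hv, hw, add_zero]
  | tmul x a =>
    obtain ⟨f', hf'⟩ : ∃ f', (f : ℕ) = f' + 1 := ⟨f - 1, by omega⟩
    have hsign : (-1 : ℤ) ^ (e : ℕ) * (-1) ^ (f' + 1) + (-1) ^ f' * (-1) ^ (e : ℕ) = 0 := by
      ring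
    rw [pD_pLof_complPair k A M q hef, map_add, map_zsmul, map_zsmul,
      topChainToCoinvariants_pLof, topChainToCoinvariants_pLof, mkQ_op_smul_eq_mkQ_smul,
      smul_smul, smul_smul, ← add_smul, hf', Nat.add_sub_cancel, hsign, zero_smul]

lemma mkQ_pLof_complSingleton_succ (i : Fin (q + 1)) (y : M) :
    (LinearMap.range (pD k A M (q + 2) q)).mkQ
        (pLof k A M (complSingleton i.succ) (castTop k A M q y)) =
      -(LinearMap.range (pD k A M (q + 2) q)).mkQ
        (pLof k A M (complSingleton i.castSucc) (castTop k A M q y)) := by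
  have hi : i.castSucc < i.succ := Fin.castSucc_lt_succ
  have hmem := LinearMap.mem_range_self (pD k A M (q + 2) q)
    (pLof k A M (complPair _ _ hi.ne) (castSubtop k A M q (y ⊗ₜ[k] 1)))
  rw [pD_pLof_complPair k A M q hi, Fin.val_castSucc, Fin.val_succ, Nat.add_sub_cancel,
    ← smul_add, MulOpposite.op_one, one_smul, one_smul] at hmem
  rw [eq_neg_iff_add_eq_zero, ← map_add, Submodule.mkQ_apply, Submodule.Quotient.mk_eq_zero]
  rcases neg_one_pow_eq_or ℤ (i : ℕ) with h | h
  · rwa [h, one_smul] at hmem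
  · rwa [h, neg_one_smul, neg_mem_iff] at hmem

lemma mkQ_pLof_complSingleton (g : Fin (q + 2)) (y : M) :
    (LinearMap.range (pD k A M (q + 2) q)).mkQ
        (pLof k A M (complSingleton g) (castTop k A M q y)) =
      (-1 : ℤ) ^ (g : ℕ) • (LinearMap.range (pD k A M (q + 2) q)).mkQ
        (pLof k A M (complSingleton 0) (castTop k A M q y)) := by
  induction g using Fin.induction with
  | zero => simp
  | succ i ih =>
    rw [mkQ_pLof_complSingleton_succ, ih, Fin.val_castSucc, Fin.val_succ, pow_succ,
      mul_neg_one, neg_smul]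

lemma mkQ_pLof_complSingleton_zero_op_smul (x : M) (a : A) :
    (LinearMap.range (pD k A M (q + 2) q)).mkQ
        (pLof k A M (complSingleton 0) (castTop k A M q (MulOpposite.op a • x))) =
      (LinearMap.range (pD k A M (q + 2) q)).mkQ
        (pLof k A M (complSingleton 0) (castTop k A M q (a • x))) := by
  have h01 : (0 : Fin (q + 2)) < 1 := Fin.zero_lt_one
  have hmem := LinearMap.mem_range_self (pD k A M (q + 2) q)
    (pLof k A M (complPair 0 1 h01.ne) (castSubtop k A M q (x ⊗ₜ[k] a)))
  rw [pD_pLof_complPair k A M q h01] at hmem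
  simp only [Fin.val_zero, Fin.val_one, Nat.sub_self, pow_zero, one_smul] at hmem
  rw [← Submodule.Quotient.mk_eq_zero, Submodule.Quotient.mk_add, ← Submodule.mkQ_apply,
    ← Submodule.mkQ_apply, mkQ_pLof_complSingleton, Fin.val_one, pow_one, neg_one_smul,
    neg_add_eq_zero] at hmem
  exact hmem

noncomputable def coinvariantsToTopQuotient :
    M ⧸ LinearMap.range (hboundaryZero k A M) →ₗ[k]
      PChain k A M (q + 2) (q + 1) ⧸ LinearMap.range (pD k A M (q + 2) q) :=
  (LinearMap.range (hboundaryZero k A M)).liftQ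
    ((LinearMap.range (pD k A M (q + 2) q)).mkQ ∘ₗ pLof k A M (complSingleton 0) ∘ₗ
      (castTop k A M q).toLinearMap)
    (LinearMap.range_le_ker_iff.mpr (TensorProduct.ext' fun x a => by
      simpa [hboundaryZero_tmul, sub_eq_zero] using
        mkQ_pLof_complSingleton_zero_op_smul k A M q x a))

noncomputable def topQuotientToCoinvariants :
    PChain k A M (q + 2) (q + 1) ⧸ LinearMap.range (pD k A M (q + 2) q) →ₗ[k]
      M ⧸ LinearMap.range (hboundaryZero k A M) :=
  (LinearMap.range (pD k A M (q + 2) q)).liftQ (topChainToCoinvariants k A M q)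
    (LinearMap.range_le_ker_iff.mpr (topChainToCoinvariants_comp_pD k A M q))

noncomputable def topQuotientEquivCoinvariants :
    (PChain k A M (q + 2) (q + 1) ⧸ LinearMap.range (pD k A M (q + 2) q)) ≃ₗ[k]
      M ⧸ LinearMap.range (hboundaryZero k A M) :=
  LinearEquiv.ofLinearMap (topQuotientToCoinvariants k A M q) (coinvariantsToTopQuotient k A M q)
    (Submodule.linearMap_qext _ <| LinearMap.ext fun y =>
      (topChainToCoinvariants_pLof k A M q 0 y).trans (one_smul ℤ _))
    (Submodule.linearMap_qext _ <| DirectSum.linearMap_ext k fun s => LinearMap.ext fun w => by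
      obtain ⟨g, rfl⟩ := s.eq_complSingleton
      obtain ⟨y, rfl⟩ := (castTop k A M q).surjective w
      change coinvariantsToTopQuotient k A M q (topChainToCoinvariants k A M q
          (pLof k A M (complSingleton g) (castTop k A M q y))) =
        (LinearMap.range (pD k A M (q + 2) q)).mkQ
          (pLof k A M (complSingleton g) (castTop k A M q y))
      rw [topChainToCoinvariants_pLof, map_zsmul, mkQ_pLof_complSingleton]
      rfl)

noncomputable def polyCohTopEquivHochHZero :
    PolyCoh k A M (q + 2) (q + 1) ≃ₗ[k] HochH k A M 0 :=
  (Submodule.quotientComapSubtypeEquivOfEqTop _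
      (by rw [pD_eq_zero k A M (by omega)]; exact LinearMap.ker_zero) _).trans <|
    (topQuotientEquivCoinvariants k A M q).trans (hochHZeroEquiv k A M).symm

end Polygon

theorem polygon_top_cohomology_general
    (k : Type u) [CommRing k] (A : Type u) [Ring A] [Algebra k A]
    (n : ℕ) (hn : 2 ≤ n) :
    Nonempty (PolyCoh k A A (n+1) n ≃ₗ[k]
      (A ⧸ Submodule.span k {x : A | ∃ a b : A, x = a * b - b * a})) ∧
    Nonempty (PolyCoh k A A (n+1) n ≃ₗ[k] HochH k A A 0) := by
  obtain ⟨q, rfl⟩ : ∃ q, n = q + 1 := ⟨n - 1, by omega⟩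
  let e := polyCohTopEquivHochHZero k A A q
  exact ⟨⟨e.trans <| (hochHZeroEquiv k A A).trans <|
    Submodule.quotEquivOfEq _ _ (range_hboundaryZero_self k A)⟩, ⟨e⟩⟩

/-- Let `k` be a commutative ring, `A` a unital `k`-algebra which is free
as a `k`-module, and `n ≥ 2`.  Then the top graph cohomology of the directed `(n+1)`-gon
satisfies `Ĥ^n_A(P_{n+1}) ≅ A / C`, where `C` is the `k`-submodule of `A` generated by all
commutators `a*b - b*a`; equivalently `Ĥ^n_A(P_{n+1}) ≅ HH_0(A)`. -/
theorem polygon_top_cohomology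
    (k : Type u) [CommRing k] (A : Type u) [Ring A] [Algebra k A] [Module.Free k A]
    (n : ℕ) (hn : 2 ≤ n) :
    Nonempty (PolyCoh k A A (n+1) n ≃ₗ[k]
      (A ⧸ Submodule.span k {x : A | ∃ a b : A, x = a * b - b * a})) ∧
    Nonempty (PolyCoh k A A (n+1) n ≃ₗ[k] HochH k A A 0) :=
  polygon_top_cohomology_general k A n hn
end

section
/- Let k be a commutative ring and A a commutative unital k-algebra. For n ≥ 1 and a_0, a_1, …, a_n ∈ A, let ε_n(a_0, a_1,…,a_n) = Σ_{σ∈S_n} sgn(σ) (a_0, a_{σ^{−1}(1)},…, a_{σ^{−1}(n)}) ∈ A^{⊗(n+1)}. Then the Hochschild boundary of this element vanishes: b(ε_n(a_0,a_1,…,a_n)) = 0. -/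
open TensorProduct DirectSum

universe u

section Elem

variable (k : Type u) [CommRing k] (A : Type u) [Ring A] [Algebra k A]
variable (M : Type u) [AddCommGroup M] [Module k M]
  [Module A M] [Module Aᵐᵒᵖ M] [SMulCommClass A Aᵐᵒᵖ M]
  [IsScalarTower k A M] [IsScalarTower k Aᵐᵒᵖ M]

/-- The elementary tensor `(x, a_1, …, a_r) = x ⊗ a_1 ⊗ ⋯ ⊗ a_r` in the Hochschild chain
module `C_r(A,M) = M ⊗ A^{⊗ r}`, where `a_i = v (i-1)`. -/
noncomputable def helem : (r : ℕ) → M → (Fin r → A) → HC k A M r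
  | 0, x, _ => x
  | (r+1), x, v => (helem r x (fun i => v i.castSucc)) ⊗ₜ[k] (v (Fin.last r))

end Elem

/-!
Expand `b = Σ_j (-1)^j d_j` and sum over `σ` one face at a time. For an inner face `d_j`,
`0 < j < n`, which multiplies the entries in positions `j` and `j + 1`, the summands of `σ` and
of `(j j+1) σ` carry opposite signs but, `A` being commutative, equal faces; so they cancel in
pairs. The outer faces `d_0` and `d_n` agree up to the cyclic rotation of `(a_1, …, a_n)`, an
`n`-cycle of sign `(-1)^(n-1)`; after reindexing by it their contributions cancel as well.
-/

namespace Fin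

variable {α : Type*} {n : ℕ}

theorem init_contractNth_castSucc (op : α → α → α) (j : Fin (n + 1)) (g : Fin (n + 2) → α) :
    init (contractNth j.castSucc op g) = contractNth j op (init g) := by
  ext k
  rcases lt_trichotomy (k : ℕ) j with h | h | h
  · simp [init, contractNth_apply_of_lt, h]
  · simp [init, contractNth_apply_of_eq, h]
  · simp [init, contractNth_apply_of_gt, h]

theorem contractNth_castSucc_comp_swap (op : α → α → α) (hop : ∀ x y, op x y = op y x)
    (i : Fin n) (g : Fin (n + 1) → α) :
    contractNth i.castSucc op (g ∘ Equiv.swap i.castSucc i.succ) = contractNth i.castSucc op g := by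
  ext k
  rcases lt_trichotomy (k : ℕ) i with h | h | h
  · rw [contractNth_apply_of_lt _ _ _ _ h, contractNth_apply_of_lt _ _ _ _ h, Function.comp_apply,
      Equiv.swap_apply_of_ne_of_ne] <;> simp [Fin.ext_iff] <;> omega
  · have hk : k = i := Fin.ext h
    subst hk
    rw [contractNth_apply_of_eq _ _ _ _ h, contractNth_apply_of_eq _ _ _ _ h, Function.comp_apply,
      Function.comp_apply, Equiv.swap_apply_left, Equiv.swap_apply_right, hop]
  · rw [contractNth_apply_of_gt _ _ _ _ h, contractNth_apply_of_gt _ _ _ _ h, Function.comp_apply,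
      Equiv.swap_apply_of_ne_of_ne] <;> simp [Fin.ext_iff] <;> omega

theorem init_comp_finRotate (w : Fin (n + 1) → α) :
    init (w ∘ finRotate (n + 1)) = tail w := by
  ext i
  simp [init, tail]

end Fin

namespace Equiv.Perm

theorem sum_sign_smul_eq_zero {ι M : Type*} [DecidableEq ι] [Fintype ι] [AddCommGroup M]
    (f : Perm ι → M) {i j : ι} (hij : i ≠ j) (hf : ∀ σ, f (swap i j * σ) = f σ) :
    ∑ σ, (sign σ : ℤ) • f σ = 0 :=
  Finset.sum_involution (fun σ _ => swap i j * σ)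
    (fun σ _ => by simp [sign_swap hij, hf])
    (fun σ _ _ => (not_congr swap_mul_eq_iff).mpr hij) (fun _ _ => Finset.mem_univ _)
    (fun σ _ => swap_mul_involutive i j σ)

end Equiv.Perm

section Faces

variable (k : Type u) [CommRing k] (A : Type u) [Ring A] [Algebra k A]
variable (M : Type u) [AddCommGroup M] [Module k M]

theorem helem_succ (r : ℕ) (x : M) (v : Fin (r + 1) → A) :
    helem k A M (r + 1) x v = helem k A M r x (Fin.init v) ⊗ₜ[k] v (Fin.last r) := rfl

variable [Module A M] [IsScalarTower k A M]

theorem actL_helem (r : ℕ) (b : A) (x : M) (v : Fin r → A) :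
    actL k A M r b (helem k A M r x v) = helem k A M r (b • x) v := by
  induction r with
  | zero => rfl
  | succ r ih =>
    rw [helem_succ, helem_succ, ← ih]
    exact LinearMap.rTensor_tmul _ _ _ _

variable [Module Aᵐᵒᵖ M] [IsScalarTower k Aᵐᵒᵖ M]

theorem hface_zero_helem (r : ℕ) (x : M) (v : Fin (r + 1) → A) :
    hface k A M r 0 (helem k A M (r + 1) x v)
      = helem k A M r (MulOpposite.op (v 0) • x) (Fin.tail v) := by
  induction r with
  | zero => rfl
  | succ r ih =>
    have hface_zero : hface k A M (r + 1) 0 = LinearMap.rTensor A (hface k A M r 0) :=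
      dif_pos (Nat.zero_le r)
    rw [helem_succ, hface_zero]
    exact (LinearMap.rTensor_tmul _ _ _ _).trans (congrArg (· ⊗ₜ[k] _) (ih _))

theorem hface_last_helem (r : ℕ) (x : M) (v : Fin (r + 1) → A) :
    hface k A M r (Fin.last (r + 1)) (helem k A M (r + 1) x v)
      = helem k A M r (v (Fin.last r) • x) (Fin.init v) := by
  cases r with
  | zero => rfl
  | succ r =>
    have hface_last : hface k A M (r + 1) (Fin.last (r + 2))
        = TensorProduct.lift (actL k A M (r + 1)).flip :=
      (dif_neg (by simp)).trans (if_neg (by simp))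
    rw [hface_last]
    exact ((TensorProduct.lift.tmul _ _).trans (LinearMap.flip_apply _ _ _)).trans
      (actL_helem k A M (r + 1) _ x _)

theorem hface_succ_helem (r : ℕ) (i : Fin r) (x : M) (v : Fin (r + 1) → A) :
    hface k A M r i.castSucc.succ (helem k A M (r + 1) x v)
      = helem k A M r x (Fin.contractNth i.castSucc (· * ·) v) := by
  induction r with
  | zero => exact i.elim0
  | succ r ih =>
    rw [helem_succ]
    induction i using Fin.lastCases with
    | last =>
      have hface_mul : hface k A M (r + 1) (Fin.last r).castSucc.succ
          = (LinearMap.lTensor _ (LinearMap.mul' k A)).comp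
              (TensorProduct.assoc k (HC k A M r) A A).toLinearMap :=
        (dif_neg (by simp)).trans (if_pos (by simp))
      rw [hface_mul, helem_succ]
      refine (LinearMap.lTensor_tmul _ _ _ _).trans ?_
      simp only [TensorProduct.mk_apply, LinearMap.mul'_apply]
      rw [helem_succ]
      congr 1
      · congr 1
        ext m
        exact (Fin.contractNth_apply_of_lt _ _ _ _ (by simp)).symm
      · exact (Fin.contractNth_apply_of_eq _ _ v (Fin.last r) rfl).symm
    | cast j =>
      have hface_cast : hface k A M (r + 1) j.castSucc.castSucc.succ
          = LinearMap.rTensor A (hface k A M r j.castSucc.succ) :=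
        dif_pos (by simp [Nat.succ_le_of_lt j.isLt])
      rw [hface_cast]
      refine (LinearMap.rTensor_tmul _ _ _ _).trans ?_
      rw [ih, helem_succ, Fin.init_contractNth_castSucc]
      congr 1
      exact (Fin.contractNth_apply_of_gt _ _ v (Fin.last r) (by simp)).symm

end Faces

section Antisymmetrization

variable (k : Type u) [CommRing k] (A : Type u) [CommRing A] [Algebra k A]
variable {M : Type u} [AddCommGroup M] [Module k M]
  [Module A M] [Module Aᵐᵒᵖ M] [IsScalarTower k A M] [IsScalarTower k Aᵐᵒᵖ M]

open Equiv Perm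

theorem sum_sign_smul_hface_succ_helem (r : ℕ) (i : Fin r) (x : M) (v : Fin (r + 1) → A) :
    ∑ σ : Perm (Fin (r + 1)),
      (sign σ : ℤ) • hface k A M r i.castSucc.succ (helem k A M (r + 1) x (fun j => v (σ⁻¹ j)))
      = 0 := by
  refine sum_sign_smul_eq_zero _ (Fin.castSucc_lt_succ (i := i)).ne fun σ => ?_
  rw [hface_succ_helem, hface_succ_helem]
  congr 1
  exact Fin.contractNth_castSucc_comp_swap _ mul_comm i (fun j => v (σ⁻¹ j))

theorem hface_last_helem_comp_finRotate
    (hM : ∀ (a : A) (x : M), MulOpposite.op a • x = a • x) (r : ℕ) (x : M)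
    (w : Fin (r + 1) → A) :
    hface k A M r (Fin.last (r + 1)) (helem k A M (r + 1) x (w ∘ finRotate (r + 1)))
      = hface k A M r 0 (helem k A M (r + 1) x w) := by
  rw [hface_last_helem, hface_zero_helem, Fin.init_comp_finRotate, Function.comp_apply,
    finRotate_last, hM]

theorem sum_sign_smul_hface_last_helem
    (hM : ∀ (a : A) (x : M), MulOpposite.op a • x = a • x) (r : ℕ) (x : M)
    (v : Fin (r + 1) → A) :
    ∑ σ : Perm (Fin (r + 1)),
      (sign σ : ℤ) • hface k A M r (Fin.last (r + 1)) (helem k A M (r + 1) x (fun j => v (σ⁻¹ j)))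
      = (-1 : ℤ) ^ r • ∑ σ : Perm (Fin (r + 1)),
          (sign σ : ℤ) • hface k A M r 0 (helem k A M (r + 1) x (fun j => v (σ⁻¹ j))) := by
  rw [← Equiv.sum_comp (Equiv.mulLeft (finRotate (r + 1))⁻¹), Finset.smul_sum]
  refine Finset.sum_congr rfl fun σ _ => ?_
  have hsign : (sign ((finRotate (r + 1))⁻¹ * σ) : ℤ) = (-1) ^ r * sign σ := by
    rw [map_mul, sign_inv, sign_finRotate]
    push_cast
    simp
  have hrotate : (fun j => v (((finRotate (r + 1))⁻¹ * σ)⁻¹ j))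
      = (fun j => v (σ⁻¹ j)) ∘ finRotate (r + 1) := by
    ext j
    simp
  rw [Equiv.coe_mulLeft, hsign, hrotate, hface_last_helem_comp_finRotate k A hM, mul_smul]

theorem hboundary_sum_sign_smul_helem
    (hM : ∀ (a : A) (x : M), MulOpposite.op a • x = a • x) (r : ℕ) (x : M)
    (v : Fin (r + 1) → A) :
    hboundary k A M r (∑ σ : Perm (Fin (r + 1)),
      (sign σ : ℤ) • helem k A M (r + 1) x (fun i => v (σ⁻¹ i))) = 0 := by
  set F : Fin (r + 2) → HC k A M r := fun j => ∑ σ : Perm (Fin (r + 1)),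
    (sign σ : ℤ) • hface k A M r j (helem k A M (r + 1) x (fun i => v (σ⁻¹ i))) with hF
  have hsplit : hboundary k A M r (∑ σ : Perm (Fin (r + 1)),
      (sign σ : ℤ) • helem k A M (r + 1) x (fun i => v (σ⁻¹ i)))
      = ∑ j : Fin (r + 2), ((-1 : ℤ) ^ (j : ℕ)) • F j := by
    simp only [hF, hboundary, map_sum, map_zsmul, LinearMap.sum_apply, LinearMap.smul_apply,
      Finset.smul_sum, smul_comm ((-1 : ℤ) ^ _)]
    exact Finset.sum_comm
  have hinner (i : Fin r) : F i.castSucc.succ = 0 := sum_sign_smul_hface_succ_helem k A r i x v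
  have hlast : F (Fin.last (r + 1)) = (-1 : ℤ) ^ r • F 0 :=
    sum_sign_smul_hface_last_helem k A hM r x v
  rw [hsplit, Fin.sum_univ_succ, Fin.sum_univ_castSucc, Fin.succ_last, hlast]
  simp only [hinner, smul_zero, Finset.sum_const_zero, zero_add, smul_smul, ← pow_add,
    Fin.val_last, Fin.val_zero, pow_zero, one_smul]
  rw [Odd.neg_one_pow ⟨r, by omega⟩, neg_one_smul, add_neg_cancel]

end Antisymmetrization

/-- **Statement 7.** Let `k` be a commutative ring and `A` a commutative unital
`k`-algebra.  For `n = r + 1 ≥ 1` and `a₀, a₁, …, a_n ∈ A`, the antisymmetrization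
`ε_n(a₀, a₁, …, a_n) = Σ_{σ ∈ S_n} sgn(σ) (a₀, a_{σ⁻¹(1)}, …, a_{σ⁻¹(n)}) ∈ A^{⊗(n+1)}`
is killed by the Hochschild boundary: `b (ε_n (a₀, a₁, …, a_n)) = 0`. -/
theorem hochschild_boundary_antisymmetrization
    (k : Type u) [CommRing k] (A : Type u) [CommRing A] [Algebra k A]
    (r : ℕ) (a₀ : A) (a : Fin (r+1) → A) :
    hboundary k A A r
      (∑ σ : Equiv.Perm (Fin (r+1)),
        ((Equiv.Perm.sign σ : ℤ)) • helem k A A (r+1) a₀ (fun i => a (σ⁻¹ i))) = 0 :=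
  hboundary_sum_sign_smul_helem k A (fun b x => mul_comm x b) r a₀ a
end

section
/- Let p ∈ ℤ[x] be monic of degree d ≥ 1, and let R = ℤ[x,y]/(p(x), p(y)). Let q ∈ R denote the class of the polynomial (p(x) − p(y))/(x − y) ∈ ℤ[x,y]. Then multiplication by (x − y) and multiplication by q form an exact pair on R: the annihilator { f ∈ R : (x − y)·f = 0 } equals the ideal of R generated by q, and the annihilator { f ∈ R : q·f = 0 } equals the ideal of R generated by x − y. -/
open Polynomial

/-- `x = C X`, the first variable of `ℤ[x,y] = (ℤ[x])[y]`. -/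
noncomputable def xVar : Polynomial (Polynomial ℤ) := Polynomial.C Polynomial.X

/-- `y = X`, the second variable of `ℤ[x,y] = (ℤ[x])[y]`. -/
noncomputable def yVar : Polynomial (Polynomial ℤ) := Polynomial.X

/-- `R = ℤ[x,y]/(p(x), p(y))`. -/
noncomputable def Rxy (p : Polynomial ℤ) : Type :=
  Polynomial (Polynomial ℤ) ⧸
    Ideal.span ({Polynomial.aeval xVar p, Polynomial.aeval yVar p} :
      Set (Polynomial (Polynomial ℤ)))

noncomputable instance (p : Polynomial ℤ) : CommRing (Rxy p) :=
  inferInstanceAs (CommRing (Polynomial (Polynomial ℤ) ⧸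
    Ideal.span ({Polynomial.aeval xVar p, Polynomial.aeval yVar p} :
      Set (Polynomial (Polynomial ℤ)))))

/-- The quotient map `ℤ[x,y] → R = ℤ[x,y]/(p(x), p(y))`. -/
noncomputable def mkR (p : Polynomial ℤ) : Polynomial (Polynomial ℤ) →+* Rxy p :=
  Ideal.Quotient.mk _

/-- The divided-difference polynomial `(p(x) - p(y))/(x - y) ∈ ℤ[x,y]`, written out
explicitly as `Σ_i Σ_{j < i} (coeff of p at i) · x^j · y^{i-1-j}`. -/
noncomputable def divDiff (p : Polynomial ℤ) : Polynomial (Polynomial ℤ) :=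
  ∑ i ∈ Finset.range (p.natDegree + 1), ∑ j ∈ Finset.range i,
    Polynomial.C (Polynomial.C (p.coeff i)) * xVar ^ j * yVar ^ (i - 1 - j)

lemma aeval_xVar (p : Polynomial ℤ) : Polynomial.aeval xVar p = Polynomial.C p := by
  rw [xVar, ← Polynomial.algebraMap_eq, Polynomial.aeval_algebraMap_apply,
    Polynomial.aeval_X_left_apply]

lemma sub_eq (p : Polynomial ℤ) :
    Polynomial.aeval xVar p - Polynomial.aeval yVar p = (xVar - yVar) * divDiff p := by
  rw [divDiff, Finset.mul_sum, Polynomial.aeval_eq_sum_range, Polynomial.aeval_eq_sum_range,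
    ← Finset.sum_sub_distrib]
  refine Finset.sum_congr rfl fun i _ => ?_
  rw [← smul_sub]
  trans Polynomial.C (Polynomial.C (p.coeff i)) *
      ((∑ j ∈ Finset.range i, xVar ^ j * yVar ^ (i - 1 - j)) * (xVar - yVar))
  · rw [geom_sum₂_mul, zsmul_eq_mul]
    congr 1
  · rw [Finset.mul_sum, Finset.sum_mul, Finset.mul_sum]
    exact Finset.sum_congr rfl fun j _ => by ring

noncomputable def mkP (p : Polynomial ℤ) :
    Polynomial ℤ →+* (Polynomial ℤ ⧸ Ideal.span ({p} : Set (Polynomial ℤ))) :=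
  Ideal.Quotient.mk _

noncomputable def phi (p : Polynomial ℤ) :
    Polynomial (Polynomial ℤ) →+*
      Polynomial (Polynomial ℤ ⧸ Ideal.span ({p} : Set (Polynomial ℤ))) :=
  Polynomial.mapRingHom (mkP p)

lemma ker_phi (p : Polynomial ℤ) :
    RingHom.ker (phi p) = Ideal.span {Polynomial.C p} := by
  rw [phi, Polynomial.ker_mapRingHom, mkP, Ideal.mk_ker, Ideal.map_span, Set.image_singleton]

lemma key (p : Polynomial ℤ) (M H : Polynomial (Polynomial ℤ)) (hreg : IsLeftRegular (phi p M))
    (h : M * H ∈ Ideal.span {Polynomial.C p}) : H ∈ Ideal.span {Polynomial.C p} := by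
  rw [← ker_phi, RingHom.mem_ker] at h ⊢
  apply hreg
  show phi p M * phi p H = phi p M * 0
  rw [← map_mul, h, mul_zero]

lemma phi_aeval_y (p : Polynomial ℤ) :
    phi p (Polynomial.aeval yVar p) = p.map (Int.castRingHom _) := by
  have : (phi p).comp ((Polynomial.aeval yVar).toRingHom) =
      Polynomial.mapRingHom (Int.castRingHom _) := by
    apply Polynomial.ringHom_ext
    · intro a; simp [phi, yVar]
    · simp [phi, yVar]
  exact RingHom.congr_fun this p

lemma phi_Cp (p : Polynomial ℤ) : phi p (Polynomial.C p) = 0 := by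
  simp [phi, mkP, Ideal.Quotient.eq_zero_iff_mem, Ideal.mem_span_singleton]

lemma hP2 (p : Polynomial ℤ) :
    Polynomial.aeval yVar p = Polynomial.C p + (yVar - xVar) * divDiff p := by
  have := sub_eq p
  rw [← aeval_xVar p]
  linear_combination -this

lemma phi_y_factor (p : Polynomial ℤ) :
    phi p (Polynomial.aeval yVar p) =
      (Polynomial.X - Polynomial.C (mkP p Polynomial.X)) * phi p (divDiff p) := by
  rw [hP2, map_add, map_mul, phi_Cp, zero_add]
  congr 1
  simp [phi, xVar, yVar]

lemma reg_xy (p : Polynomial ℤ) : IsLeftRegular (phi p (yVar - xVar)) := by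
  have h : phi p (yVar - xVar) = Polynomial.X - Polynomial.C (mkP p Polynomial.X) := by
    simp [phi, xVar, yVar]
  rw [h]
  exact (Polynomial.monic_X_sub_C _).isRegular.left

lemma reg_Q (p : Polynomial ℤ) (hp : p.Monic) : IsLeftRegular (phi p (divDiff p)) := by
  have hm : (phi p (Polynomial.aeval yVar p)).Monic := by
    rw [phi_aeval_y]; exact hp.map _
  have := hm.isRegular.left
  rw [phi_y_factor] at this
  exact this.of_mul

/-- **Statement 17.** Let `p ∈ ℤ[x]` be monic of degree `d ≥ 1` and
`R = ℤ[x,y]/(p(x), p(y))`.  Let `q ∈ R` be the class of `(p(x) - p(y))/(x - y)`.  Then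
multiplication by `x - y` and multiplication by `q` form an exact pair on `R`: the
annihilator `{f ∈ R : (x-y)·f = 0}` equals the ideal generated by `q`, and the
annihilator `{f ∈ R : q·f = 0}` equals the ideal generated by `x - y`. -/
theorem exact_pair_xy (p : Polynomial ℤ) (hp : p.Monic) (hd : 1 ≤ p.natDegree) :
    ({f : Rxy p | mkR p (xVar - yVar) * f = 0} =
      (Ideal.span ({mkR p (divDiff p)} : Set (Rxy p)) : Set (Rxy p))) ∧
    ({f : Rxy p | mkR p (divDiff p) * f = 0} =
      (Ideal.span ({mkR p (xVar - yVar)} : Set (Rxy p)) : Set (Rxy p))) := by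
  have surj : Function.Surjective (mkR p) := Ideal.Quotient.mk_surjective
  have hzero : ∀ z, mkR p z = 0 ↔ z ∈
      Ideal.span ({Polynomial.aeval xVar p, Polynomial.aeval yVar p} :
        Set (Polynomial (Polynomial ℤ))) := fun z => Ideal.Quotient.eq_zero_iff_mem
  have hCp : Polynomial.C p ∈
      Ideal.span ({Polynomial.aeval xVar p, Polynomial.aeval yVar p} :
        Set (Polynomial (Polynomial ℤ))) := by
    rw [← aeval_xVar]; exact Ideal.subset_span (by simp)
  have hspanle : Ideal.span {Polynomial.C p} ≤
      Ideal.span ({Polynomial.aeval xVar p, Polynomial.aeval yVar p} :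
        Set (Polynomial (Polynomial ℤ))) := (Ideal.span_singleton_le_iff_mem _).mpr hCp
  have hmulzero : mkR p ((xVar - yVar) * divDiff p) = 0 := by
    rw [hzero, ← sub_eq]
    exact Ideal.sub_mem _ (Ideal.subset_span (by simp)) (Ideal.subset_span (by simp))
  constructor
  · ext f
    simp only [Set.mem_setOf_eq, SetLike.mem_coe]
    constructor
    · intro h
      obtain ⟨F, rfl⟩ := surj f
      rw [← map_mul, hzero] at h
      obtain ⟨A, B, hAB⟩ := Ideal.mem_span_pair.mp h
      have hm : (yVar - xVar) * (-(F + B * divDiff p)) ∈ Ideal.span {Polynomial.C p} := by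
        rw [Ideal.mem_span_singleton]
        refine ⟨A + B, ?_⟩
        linear_combination -hAB + A * aeval_xVar p + B * hP2 p
      have hmem := key p _ _ (reg_xy p) hm
      have h0 : mkR p (-(F + B * divDiff p)) = 0 := (hzero _).mpr (hspanle hmem)
      rw [map_neg, map_add, map_mul] at h0
      refine Ideal.mem_span_singleton.mpr ⟨mkR p (-B), ?_⟩
      rw [map_neg]
      linear_combination -h0
    · intro h
      obtain ⟨c, hc⟩ := Ideal.mem_span_singleton.mp h
      obtain ⟨C', rfl⟩ := hc
      rw [← mul_assoc, ← map_mul, hmulzero, zero_mul]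
  · ext f
    simp only [Set.mem_setOf_eq, SetLike.mem_coe]
    constructor
    · intro h
      obtain ⟨F, rfl⟩ := surj f
      rw [← map_mul, hzero] at h
      obtain ⟨A, B, hAB⟩ := Ideal.mem_span_pair.mp h
      have hm : divDiff p * (F - B * (yVar - xVar)) ∈ Ideal.span {Polynomial.C p} := by
        rw [Ideal.mem_span_singleton]
        refine ⟨A + B, ?_⟩
        linear_combination -hAB + A * aeval_xVar p + B * hP2 p
      have hmem := key p _ _ (reg_Q p hp) hm
      have h0 : mkR p (F - B * (yVar - xVar)) = 0 := (hzero _).mpr (hspanle hmem)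
      rw [map_sub, map_mul, map_sub] at h0
      refine Ideal.mem_span_singleton.mpr ⟨mkR p (-B), ?_⟩
      rw [map_neg, map_sub]
      linear_combination h0
    · intro h
      obtain ⟨c, hc⟩ := Ideal.mem_span_singleton.mp h
      obtain ⟨C', rfl⟩ := hc
      rw [← mul_assoc, ← map_mul, mul_comm (divDiff p), hmulzero, zero_mul]
end
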